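/- arXiv:1710.06766 — 2 statements merged into one kernel-verified Lean document; each statement's English description precedes it below -/
import Mathlib

section
/- (Massey's bound) For any integer-valued random variable U with finite variance, H(U) ≤ (1/2) log(2πe(Var[U] + 1/12)), where H is the Shannon entropy in nats. -/
/-!
Let `s = Var U + 1/12` and let `φ` be the Gaussian density with the mean of `U` and variance `s`.
Its masses `q n` on the unit cells `(n - 1/2, n + 1/2]` sum to `1`, and by Jensen's inequality
`q n ≥ exp L n`, where `L n` is the average of `log φ` over the cell: an explicit quadratic in `n`,
whose `1/12` is `∫_{-1/2}^{1/2} t² dt`. Gibbs' inequality against `q` gives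
`H(U) ≤ -E[L U] = ½ log (2πs) + (Var U + 1/12) / (2s) = ½ log (2πes)`.
-/

open MeasureTheory ProbabilityTheory Real
open scoped NNReal

theorem mul_add_sub_le_mul_log_of_exp_le {a b c : ℝ} (ha : 0 ≤ a) (hc : exp c ≤ b) :
    a * c + (a - b) ≤ a * log a := by
  have hb : 0 < b := (exp_pos c).trans_le hc
  rcases ha.eq_or_lt with rfl | ha
  · simpa using hb.le
  have hcb : a * c ≤ a * log b := by gcongr; exact (le_log_iff_exp_le hb).2 hc
  have hlog_div : a * log (b / a) ≤ a * (b / a - 1) := by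
    gcongr; exact log_le_sub_one_of_pos (by positivity)
  rw [log_div hb.ne' ha.ne', mul_sub, mul_sub, mul_div_cancel₀ _ ha.ne'] at hlog_div
  linarith

theorem tsum_mul_le_tsum_mul_log {ι : Type*} {f q L : ι → ℝ} (hf : ∀ i, 0 ≤ f i)
    (hf1 : HasSum f 1) (hq : Summable q) (hq1 : ∑' i, q i ≤ 1) (hL : ∀ i, exp (L i) ≤ q i)
    (hfL : Summable fun i => f i * L i) :
    ∑' i, f i * L i ≤ ∑' i, f i * log (f i) := by
  have key i : f i * L i + (f i - q i) ≤ f i * log (f i) :=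
    mul_add_sub_le_mul_log_of_exp_le (hf i) (hL i)
  have hlower : Summable fun i => f i * L i + (f i - q i) := hfL.add (hf1.summable.sub hq)
  -- `f ≤ 1` squeezes `f log f` between `0` and a summable function.
  have hflogf : Summable fun i => f i * log (f i) := by
    have hnonpos i : f i * log (f i) ≤ 0 :=
      mul_log_nonpos (hf i) (le_hasSum hf1 i fun j _ => hf j)
    refine (Summable.of_nonneg_of_le (fun i => neg_nonneg.2 (hnonpos i))
      (fun i => neg_le_neg (key i)) hlower.neg).neg.congr fun i => neg_neg _
  calc ∑' i, f i * L i ≤ ∑' i, (f i * L i + (f i - q i)) := by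
        rw [hfL.tsum_add (hf1.summable.sub hq), hf1.summable.tsum_sub hq, hf1.tsum_eq]
        linarith
    _ ≤ _ := hlower.tsum_le_tsum key hflogf

theorem intervalIntegral_sub_sq (a m : ℝ) :
    ∫ x in a..a + 1, (x - m) ^ 2 = (a + 1 / 2 - m) ^ 2 + 1 / 12 := by
  rw [intervalIntegral.integral_comp_sub_right (fun x => x ^ 2) m, integral_pow]
  ring

theorem log_gaussianPDFReal (m : ℝ) {v : ℝ≥0} (hv : v ≠ 0) (x : ℝ) :
    log (gaussianPDFReal m v x) = -log (2 * π * v) / 2 - (x - m) ^ 2 / (2 * v) := by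
  have hpos : 0 < 2 * π * v := by positivity
  rw [gaussianPDFReal, log_mul (by positivity) (exp_pos _).ne', log_inv, log_sqrt hpos.le,
    log_exp]
  ring

theorem exp_intervalIntegral_le {ψ : ℝ → ℝ} {a : ℝ} (hψ : IntervalIntegrable ψ volume a (a + 1))
    (hexp : IntervalIntegrable (fun x => exp (ψ x)) volume a (a + 1)) :
    exp (∫ x in a..a + 1, ψ x) ≤ ∫ x in a..a + 1, exp (ψ x) := by
  have hvol : volume (Set.Ioc a (a + 1)) = 1 := by simp
  have := convexOn_exp.map_set_average_le continuousOn_exp isClosed_univ (by simp [hvol])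
    (by simp [hvol]) (by simp) ((intervalIntegrable_iff_integrableOn_Ioc_of_le (by linarith)).1 hψ)
    ((intervalIntegrable_iff_integrableOn_Ioc_of_le (by linarith)).1 hexp)
  simpa [setAverage_eq, hvol, intervalIntegral.integral_of_le] using this

theorem intervalIntegral_log_gaussianPDFReal (m : ℝ) {v : ℝ≥0} (hv : v ≠ 0) (a : ℝ) :
    ∫ x in a..a + 1, log (gaussianPDFReal m v x) =
      -log (2 * π * v) / 2 - ((a + 1 / 2 - m) ^ 2 + 1 / 12) / (2 * v) := by
  simp_rw [log_gaussianPDFReal m hv]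
  rw [intervalIntegral.integral_sub intervalIntegrable_const
      ((by fun_prop : Continuous fun x : ℝ => (x - m) ^ 2 / (2 * v)).intervalIntegrable _ _),
    intervalIntegral.integral_const, intervalIntegral.integral_div, intervalIntegral_sub_sq]
  simp

theorem exp_intervalIntegral_log_gaussianPDFReal_le (m : ℝ) {v : ℝ≥0} (hv : v ≠ 0) (a : ℝ) :
    exp (∫ x in a..a + 1, log (gaussianPDFReal m v x)) ≤
      ∫ x in a..a + 1, gaussianPDFReal m v x := by
  have hexp_log x : exp (log (gaussianPDFReal m v x)) = gaussianPDFReal m v x :=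
    exp_log (gaussianPDFReal_pos m v x hv)
  have hlog : Continuous fun x => log (gaussianPDFReal m v x) := by
    simp_rw [log_gaussianPDFReal m hv]
    fun_prop
  simpa only [hexp_log] using exp_intervalIntegral_le (hlog.intervalIntegrable _ _)
    (by simpa only [hexp_log] using (integrable_gaussianPDFReal m v).intervalIntegrable)

theorem hasSum_mul_intervalIntegral_log_gaussianPDFReal {f : ℤ → ℝ} {m V : ℝ} {v : ℝ≥0}
    (hv : v ≠ 0) (hf1 : HasSum f 1) (hV : HasSum (fun n : ℤ => f n * ((n : ℝ) - m) ^ 2) V) :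
    HasSum (fun n : ℤ => f n * ∫ x in -1 / 2 + n..-1 / 2 + n + 1, log (gaussianPDFReal m v x))
      (-log (2 * π * v) / 2 - (V + 1 / 12) / (2 * v)) := by
  simp_rw [intervalIntegral_log_gaussianPDFReal m hv, show ∀ n : ℝ, -1 / 2 + n + 1 / 2 = n by
    intro n; ring]
  rw [show -log (2 * π * v) / 2 - (V + 1 / 12) / (2 * v) =
    (-log (2 * π * v) / 2 - 1 / 12 / (2 * v)) * 1 - V / (2 * v) by ring]
  exact ((hf1.mul_left _).sub (hV.div_const _)).congr_fun fun n => by ring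

theorem massey_entropy_bound_general (f : ℤ → ℝ) (hf : ∀ u, 0 ≤ f u) (hsum : ∑' u : ℤ, f u = 1)
    (hvar : Summable (fun u : ℤ => f u * ((u : ℝ) - ∑' v : ℤ, f v * (v : ℝ)) ^ 2)) :
    (-∑' u : ℤ, f u * Real.log (f u)) ≤
      (1 / 2) * Real.log (2 * Real.pi * Real.exp 1 *
        ((∑' u : ℤ, f u * ((u : ℝ) - ∑' v : ℤ, f v * (v : ℝ)) ^ 2) + 1 / 12)) := by
  set m := ∑' v : ℤ, f v * (v : ℝ)
  set V := ∑' u : ℤ, f u * ((u : ℝ) - m) ^ 2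
  have hf1 : HasSum f 1 := by
    by_cases hs : Summable f
    · exact hsum ▸ hs.hasSum
    · simp [tsum_eq_zero_of_not_summable hs] at hsum
  have hV : 0 ≤ V := tsum_nonneg fun u => mul_nonneg (hf u) (sq_nonneg _)
  let v : ℝ≥0 := ⟨V + 1 / 12, by positivity⟩
  have hv : v ≠ 0 := by
    rw [← NNReal.coe_ne_zero]
    exact (by positivity : (0 : ℝ) < V + 1 / 12).ne'
  have hcells :
      HasSum (fun n : ℤ => ∫ x in -1 / 2 + n..-1 / 2 + n + 1, gaussianPDFReal m v x) 1 := by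
    simpa [integral_gaussianPDFReal_eq_one m hv] using
      (integrable_gaussianPDFReal m v).hasSum_intervalIntegral (-1 / 2)
  have hL := hasSum_mul_intervalIntegral_log_gaussianPDFReal hv hf1 hvar.hasSum
  have hgibbs := tsum_mul_le_tsum_mul_log hf hf1 hcells.summable hcells.tsum_eq.le
    (fun n => exp_intervalIntegral_log_gaussianPDFReal_le m hv _) hL.summable
  rw [hL.tsum_eq] at hgibbs
  have hvV : (v : ℝ) = V + 1 / 12 := rfl
  have hlog : log (2 * π * exp 1 * (V + 1 / 12)) = log (2 * π * v) + 1 := by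
    rw [hvV, mul_right_comm _ (exp 1), log_mul (by positivity) (exp_pos 1).ne', log_exp]
  have hhalf : (V + 1 / 12) / (2 * v) = 1 / 2 := by
    rw [hvV]; field_simp
  rw [hlog]
  linarith

/-- Massey's bound: for any integer-valued random variable `U` (pmf `f`) with finite
variance, `H(U) ≤ ½ log(2πe (Var[U] + 1/12))`, entropy in nats. -/
theorem massey_entropy_bound (f : ℤ → ℝ) (hf : ∀ u, 0 ≤ f u) (hsum : ∑' u : ℤ, f u = 1)
    (hmean : Summable (fun u : ℤ => f u * (u : ℝ)))
    (hvar : Summable (fun u : ℤ => f u * ((u : ℝ) - ∑' v : ℤ, f v * (v : ℝ)) ^ 2)) :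
    (-∑' u : ℤ, f u * Real.log (f u)) ≤
      (1 / 2) * Real.log (2 * Real.pi * Real.exp 1 *
        ((∑' u : ℤ, f u * ((u : ℝ) - ∑' v : ℤ, f v * (v : ℝ)) ^ 2) + 1 / 12)) :=
  massey_entropy_bound_general f hf hsum hvar
end

section
/- If the entries of the test matrix X are i.i.d. Bernoulli(q) and Y depends on (β, X) only through the counts N_1,...,N_d, then I(β; Y | β_{S_ℓ^c}, X) ≤ I(X_{0,ℓ}; Y | X_{1,ℓ}), where X_{0,ℓ} is the subvector of X indexed by the hidden items S_ℓ and X_{1,ℓ} the subvector indexed by revealed items, grouped by label. -/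
/-!
Both sides are differences of conditional entropies of `Y`. The left side is
`H(Y | R, X) - H(Y | β, R, X)`, where `R` records the revealed labels, and the right side is
`H(Y | X₁) - H(Y | X₀, X₁)`. For fixed `β` and `R`, reading `X` on the hidden and on the revealed
items of each label is a bijection onto the pairs `(X₀, X₁)` that carries the i.i.d. law of `X` to
that of `(X₀, X₁)`; it turns `N` into the per-label counts of `X₀` and `X₁`, and `X₁` depends on
`(R, X)` only. Hence the two terms `H(Y | N)` agree, and `H(Y | R, X) ≤ H(Y | X₁)` because
conditioning reduces entropy (the log-sum inequality over the fibres of `(R, X) ↦ X₁`).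
-/

open Finset
open scoped Classical

/-- Conditional mutual information `I(A; C | B)` of a (sub)probability mass function `p`
on `α × β × γ`, in nats. -/
noncomputable def cmi {α β γ : Type*} [Fintype α] [Fintype β] [Fintype γ]
    (p : α → β → γ → ℝ) : ℝ :=
  ∑ a, ∑ b, ∑ c, p a b c *
    Real.log (p a b c * (∑ a', ∑ c', p a' b c') / ((∑ c', p a b c') * (∑ a', p a' b c)))

open Function Real

theorem sum_mul_log_div_le_mul_log_div {ι : Type*} (s : Finset ι) (P Q : ι → ℝ)
    (hP : ∀ i ∈ s, 0 ≤ P i) (hQ : ∀ i ∈ s, 0 ≤ Q i) (hQP : ∀ i ∈ s, P i = 0 → Q i = 0) :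
    ∑ i ∈ s, Q i * log (P i / Q i) ≤ (∑ i ∈ s, Q i) * log ((∑ i ∈ s, P i) / ∑ i ∈ s, Q i) := by
  set Qs := ∑ i ∈ s, Q i
  set Ps := ∑ i ∈ s, P i
  obtain hQs | hQs : 0 = Qs ∨ 0 < Qs := (sum_nonneg hQ).eq_or_lt
  · rw [← hQs, zero_mul]
    refine sum_nonpos fun i hi => ?_
    rw [(sum_eq_zero_iff_of_nonneg hQ).1 hQs.symm i hi, zero_mul]
  have hPos : ∀ i ∈ s, 0 < Q i → 0 < P i := fun i hi hQi =>
    (hP i hi).lt_of_ne fun h => hQi.ne' (hQP i hi h.symm)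
  have hPs : 0 < Ps := by
    obtain ⟨i, hi, hQi⟩ := exists_ne_zero_of_sum_ne_zero hQs.ne'
    exact (hPos i hi ((hQ i hi).lt_of_ne' hQi)).trans_le (single_le_sum hP hi)
  -- `log x ≤ x - 1` at `x = (P i / Q i) / (Ps / Qs)`, summed over `i`
  have key : ∀ i ∈ s, Q i * log (P i / Q i) ≤ P i * Qs / Ps - Q i + Q i * log (Ps / Qs) := by
    intro i hi
    rcases (hQ i hi).eq_or_lt with hQi | hQi
    · have := hP i hi
      rw [← hQi]
      simp only [zero_mul, sub_zero, add_zero]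
      positivity
    have hPi := hPos i hi hQi
    have hx : 0 < P i * Qs / (Q i * Ps) := by positivity
    have hsplit : log (P i / Q i) = log (P i * Qs / (Q i * Ps)) + log (Ps / Qs) := by
      rw [← log_mul hx.ne' (by positivity)]
      congr 1
      field_simp
    have hlog := mul_le_mul_of_nonneg_left (log_le_sub_one_of_pos hx) hQi.le
    have heq : Q i * (P i * Qs / (Q i * Ps) - 1) = P i * Qs / Ps - Q i := by field_simp
    rw [hsplit, mul_add]
    linarith
  calc ∑ i ∈ s, Q i * log (P i / Q i)
      ≤ ∑ i ∈ s, (P i * Qs / Ps - Q i + Q i * log (Ps / Qs)) := sum_le_sum key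
    _ = Qs * log (Ps / Qs) := by
      rw [sum_add_distrib, sum_sub_distrib, ← sum_mul, ← sum_div, ← sum_mul]
      field_simp
      ring

section Kernel

variable {α β γ : Type*} [Fintype α] [Fintype β]

/-- The two sums are `-H(Y | A, B)` and `H(Y | B)`. -/
theorem cmi_mul_kernel_eq [Fintype γ] (μ : α → β → ℝ) (K : α → β → γ → ℝ)
    (hμ : ∀ a b, 0 ≤ μ a b) (hK0 : ∀ a b y, 0 ≤ K a b y) (hK1 : ∀ a b, ∑ y, K a b y = 1) :
    cmi (fun a b y => μ a b * K a b y)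
      = ∑ a, ∑ b, μ a b * ∑ y, K a b y * log (K a b y)
        + ∑ b, ∑ y, (∑ a, μ a b * K a b y) * log ((∑ a, μ a b) / ∑ a, μ a b * K a b y) := by
  have hrow : ∀ a b, ∑ y, μ a b * K a b y = μ a b := fun a b => by
    rw [← mul_sum, hK1, mul_one]
  have hterm : ∀ a b y,
      μ a b * K a b y * log (μ a b * K a b y * (∑ a', μ a' b) /
          (μ a b * ∑ a', μ a' b * K a' b y))
        = μ a b * (K a b y * log (K a b y))
          + μ a b * K a b y * log ((∑ a', μ a' b) / ∑ a', μ a' b * K a' b y) := by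
    intro a b y
    rcases (hμ a b).eq_or_lt with h | hμab
    · rw [← h]; ring
    rcases (hK0 a b y).eq_or_lt with h | hK
    · rw [← h]; ring
    have hQ : 0 < ∑ a', μ a' b * K a' b y :=
      sum_pos' (fun a' _ => mul_nonneg (hμ a' b) (hK0 a' b y)) ⟨a, mem_univ a, by positivity⟩
    have hM : 0 < ∑ a', μ a' b := sum_pos' (fun a' _ => hμ a' b) ⟨a, mem_univ a, hμab⟩
    rw [show μ a b * K a b y * (∑ a', μ a' b) / (μ a b * ∑ a', μ a' b * K a' b y)
        = K a b y * ((∑ a', μ a' b) / ∑ a', μ a' b * K a' b y) by field_simp,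
      log_mul hK.ne' (by positivity)]
    ring
  unfold cmi
  simp only [hrow, hterm, sum_add_distrib, ← mul_sum]
  congr 1
  rw [sum_comm]
  refine sum_congr rfl fun b _ => ?_
  rw [sum_comm]
  simp only [sum_mul]

theorem sum_mul_kernel_of_map {α' β' : Type*} [Fintype α'] [DecidableEq α'] [DecidableEq β']
    {μ : α → β → ℝ} {μ' : α' → β' → ℝ} {K : α → β → γ → ℝ} {K' : α' → β' → γ → ℝ}
    {ψ : α → β → α'} {f : β → β'}
    (hpush : ∀ a' b', μ' a' b' = ∑ a, ∑ b, if ψ a b = a' ∧ f b = b' then μ a b else 0)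
    (hK : ∀ a b, μ a b ≠ 0 → K' (ψ a b) (f b) = K a b) (F : (γ → ℝ) → ℝ) (b' : β') :
    ∑ a', μ' a' b' * F (K' a' b') = ∑ b with f b = b', ∑ a, μ a b * F (K a b) := by
  have hterm : ∀ a b, ∑ a', (if ψ a b = a' ∧ f b = b' then μ a b else 0) * F (K' a' b')
      = if f b = b' then μ a b * F (K a b) else 0 := by
    intro a b
    by_cases hb : f b = b'
    · by_cases hμ : μ a b = 0
      · simp [hμ]
      · simp [hb, ← hK a b hμ]
    · simp [hb]
  simp only [hpush, sum_mul]
  rw [sum_comm]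
  simp only [sum_comm (s := (univ : Finset α')), hterm]
  rw [sum_comm, sum_filter]
  simp only [sum_ite_irrel, sum_const_zero]

theorem cmi_mul_kernel_le_of_map [Fintype γ] {α' β' : Type*} [Fintype α'] [Fintype β']
    [DecidableEq α'] [DecidableEq β']
    {μ : α → β → ℝ} {μ' : α' → β' → ℝ} {K : α → β → γ → ℝ} {K' : α' → β' → γ → ℝ}
    {ψ : α → β → α'} {f : β → β'} (hμ : ∀ a b, 0 ≤ μ a b)
    (hK0 : ∀ a b y, 0 ≤ K a b y) (hK1 : ∀ a b, ∑ y, K a b y = 1)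
    (hK'0 : ∀ a' b' y, 0 ≤ K' a' b' y) (hK'1 : ∀ a' b', ∑ y, K' a' b' y = 1)
    (hpush : ∀ a' b', μ' a' b' = ∑ a, ∑ b, if ψ a b = a' ∧ f b = b' then μ a b else 0)
    (hK : ∀ a b, μ a b ≠ 0 → K' (ψ a b) (f b) = K a b) :
    cmi (fun a b y => μ a b * K a b y) ≤ cmi (fun a' b' y => μ' a' b' * K' a' b' y) := by
  have hμ' : ∀ a' b', 0 ≤ μ' a' b' := fun a' b' => by
    rw [hpush]
    exact sum_nonneg fun a _ => sum_nonneg fun b _ => by split_ifs <;> simp [hμ]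
  have hmap := sum_mul_kernel_of_map hpush hK
  rw [cmi_mul_kernel_eq μ K hμ hK0 hK1, cmi_mul_kernel_eq μ' K' hμ' hK'0 hK'1]
  gcongr ?_ + ?_
  · refine le_of_eq ?_
    rw [sum_comm, eq_comm, sum_comm]
    simp only [hmap (fun k => ∑ y, k y * log (k y))]
    exact sum_fiberwise univ f _
  · set M := fun b => ∑ a, μ a b
    set Q := fun b y => ∑ a, μ a b * K a b y
    have hM' : ∀ b', ∑ a', μ' a' b' = ∑ b with f b = b', M b := fun b' => by
      simpa using hmap (fun _ => 1) b'
    have hQ' : ∀ b' y, ∑ a', μ' a' b' * K' a' b' y = ∑ b with f b = b', Q b y :=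
      fun b' y => hmap (fun k => k y) b'
    have hQM : ∀ b y, M b = 0 → Q b y = 0 := fun b y hb => by
      simp [Q, (sum_eq_zero_iff_of_nonneg fun a _ => hμ a b).1 hb]
    calc ∑ b, ∑ y, Q b y * log (M b / Q b y)
        = ∑ b', ∑ y, ∑ b with f b = b', Q b y * log (M b / Q b y) := by
          rw [← sum_fiberwise univ f]
          exact sum_congr rfl fun b' _ => sum_comm
      _ ≤ _ := by
          gcongr with b' _ y
          rw [hM', hQ']
          exact sum_mul_log_div_le_mul_log_div _ _ _ (fun b _ => sum_nonneg fun a _ => hμ a b)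
            (fun b _ => sum_nonneg fun a _ => mul_nonneg (hμ a b) (hK0 a b y))
            fun b _ => hQM b y

end Kernel

section RestrictFin

variable {ι γ : Type*} [LinearOrder ι] [Inhabited γ]

/-- `x` read on `s` in increasing order; junk (`default`) unless `#s = n`. -/
noncomputable def restrictFin (s : Finset ι) (x : ι → γ) (n : ℕ) : Fin n → γ :=
  if h : #s = n then fun i => x (s.orderEmbOfFin h i) else fun _ => default

theorem restrictFin_of_card_eq {s : Finset ι} {n : ℕ} (h : #s = n) (x : ι → γ) :
    restrictFin s x n = x ∘ s.orderEmbOfFin h := by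
  rw [restrictFin, dif_pos h]
  rfl

theorem prod_restrictFin {M : Type*} [CommMonoid M] {s : Finset ι} {n : ℕ} (h : #s = n)
    (x : ι → γ) (w : γ → M) : ∏ i, w (restrictFin s x n i) = ∏ j ∈ s, w (x j) := by
  conv_rhs => rw [← map_orderEmbOfFin_univ s h, prod_map]
  simp [restrictFin_of_card_eq h]

theorem card_filter_restrictFin_eq [DecidableEq γ] {s : Finset ι} {n : ℕ} (h : #s = n)
    (x : ι → γ) (a : γ) : #{i | restrictFin s x n i = a} = #{j ∈ s | x j = a} := by
  conv_rhs => rw [← map_orderEmbOfFin_univ s h, filter_map, card_map]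
  simp [restrictFin_of_card_eq h]

variable {κ : Type*} {S : κ → Finset ι} {n : κ → ℕ}

theorem restrictFin_injective (hcover : ∀ j, ∃ k, j ∈ S k) (hn : ∀ k, #(S k) = n k) :
    Injective fun (x : ι → γ) k => restrictFin (S k) x (n k) := by
  intro x x' hxx'
  funext j
  obtain ⟨k, hk⟩ := hcover j
  obtain ⟨i, rfl⟩ : j ∈ Set.range ((S k).orderEmbOfFin (hn k)) := by
    rwa [range_orderEmbOfFin]
  simpa [restrictFin_of_card_eq (hn k)] using congrFun (congrFun hxx' k) i

theorem biUnion_eq_univ_of_forall_mem [Fintype ι] [Fintype κ] (hcover : ∀ j, ∃ k, j ∈ S k) :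
    univ.biUnion S = univ :=
  eq_univ_of_forall fun j => mem_biUnion.2 <| (hcover j).imp fun _ hk => ⟨mem_univ _, hk⟩

theorem restrictFin_bijective [Fintype ι] [Fintype κ] [Fintype γ] (hS : Pairwise (Disjoint on S))
    (hcover : ∀ j, ∃ k, j ∈ S k) (hn : ∀ k, #(S k) = n k) :
    Bijective fun (x : ι → γ) k => restrictFin (S k) x (n k) := by
  refine (Fintype.bijective_iff_injective_and_card _).2 ⟨restrictFin_injective hcover hn, ?_⟩
  have hsum : ∑ k, n k = Fintype.card ι := by
    rw [← card_univ, ← biUnion_eq_univ_of_forall_mem hcover, card_biUnion (hS.set_pairwise _)]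
    simp [hn]
  simp [Fintype.card_pi, ← hsum, prod_pow_eq_pow_sum]

theorem sum_ite_restrictFin_eq_prod {R : Type*} [CommSemiring R] [Fintype ι] [Fintype κ]
    [Fintype γ] [DecidableEq γ] (hS : Pairwise (Disjoint on S)) (hcover : ∀ j, ∃ k, j ∈ S k)
    (hn : ∀ k, #(S k) = n k) (w : γ → R) (v : ∀ k, Fin (n k) → γ) :
    ∑ x : ι → γ, (if (fun k => restrictFin (S k) x (n k)) = v then ∏ j, w (x j) else 0)
      = ∏ k, ∏ i, w (v k i) := by
  have hprod : ∀ x : ι → γ, ∏ j, w (x j) = ∏ k, ∏ i, w (restrictFin (S k) x (n k) i) := by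
    intro x
    rw [← biUnion_eq_univ_of_forall_mem hcover, prod_biUnion (hS.set_pairwise _)]
    simp only [prod_restrictFin (hn _)]
  simp only [hprod]
  rw [Fintype.sum_bijective _ (restrictFin_bijective hS hcover hn) _
    (fun u => if u = v then ∏ k, ∏ i, w (u k i) else 0) fun _ => rfl]
  simp

end RestrictFin

theorem exists_card_fiber_eq {ι κ : Type*} [Fintype ι] [Fintype κ] [DecidableEq κ] (c : κ → ℕ)
    (hc : ∑ k, c k = Fintype.card ι) : ∃ b : ι → κ, ∀ k, #{j | b j = k} = c k := by
  obtain e := Fintype.equivOfCardEq (α := ι) (β := Σ k, Fin (c k)) (by simp [hc])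
  refine ⟨fun j => (e j).1, fun k => ?_⟩
  rw [card_equiv e (t := {x | x.1 = k}) (by simp), ← Fintype.card_subtype,
    Fintype.card_congr (Equiv.sigmaSubtype k), Fintype.card_fin]

section Genie

variable {p d : ℕ}

def labelItems (b : Fin p → Fin d) (t : Fin d) : Finset (Fin p) := {j | b j = t}

def labelings (c : Fin d → ℕ) : Finset (Fin p → Fin d) := {b | ∀ s, #(labelItems b s) = c s}

def hiddenItems (b : Fin p → Fin d) (r : Fin p → Option (Fin d)) (t : Fin d) : Finset (Fin p) :=
  {j | r j = none ∧ b j = t}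

def revealedItems (r : Fin p → Option (Fin d)) (t : Fin d) : Finset (Fin p) := {j | r j = some t}

/-- `r j = none`: the label of item `j` is hidden (`j ∈ S_ℓ`); `r j = some t`: it is revealed to
be `t`. -/
abbrev IsRevealPattern (ℓ : Fin d → ℕ) (b : Fin p → Fin d) (r : Fin p → Option (Fin d)) : Prop :=
  (∀ j, r j = none ∨ r j = some (b j)) ∧ ∀ t, #(hiddenItems b r t) = ℓ t

noncomputable def labelingPMF (c : Fin d → ℕ) (b : Fin p → Fin d) : ℝ :=
  if b ∈ labelings c then (1 : ℝ) / #(labelings c : Finset (Fin p → Fin d)) else 0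

noncomputable def revealPMF (c ℓ : Fin d → ℕ) (b : Fin p → Fin d) (r : Fin p → Option (Fin d)) :
    ℝ :=
  if IsRevealPattern ℓ b r then (1 : ℝ) / ∏ t, (c t).choose (ℓ t) else 0

noncomputable def hiddenValues (ℓ : Fin d → ℕ) (b : Fin p → Fin d) (r : Fin p → Option (Fin d))
    (x : Fin p → Bool) (t : Fin d) : Fin (ℓ t) → Bool :=
  restrictFin (hiddenItems b r t) x (ℓ t)

noncomputable def revealedValues (c ℓ : Fin d → ℕ) (r : Fin p → Option (Fin d))
    (x : Fin p → Bool) (t : Fin d) : Fin (c t - ℓ t) → Bool :=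
  restrictFin (revealedItems r t) x (c t - ℓ t)

variable {c ℓ : Fin d → ℕ} {b : Fin p → Fin d} {r : Fin p → Option (Fin d)}

theorem hiddenItems_subset (t : Fin d) : hiddenItems b r t ⊆ labelItems b t :=
  fun _ hj => by simp_all [hiddenItems, labelItems]

theorem disjoint_hiddenItems {t t' : Fin d} (h : t ≠ t') :
    Disjoint (hiddenItems b r t) (hiddenItems b r t') := by
  simp +contextual [disjoint_left, hiddenItems, h]

theorem disjoint_revealedItems {t t' : Fin d} (h : t ≠ t') :
    Disjoint (revealedItems r t) (revealedItems r t') := by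
  simp +contextual [disjoint_left, revealedItems, h]

theorem disjoint_hiddenItems_revealedItems (t t' : Fin d) :
    Disjoint (hiddenItems b r t) (revealedItems r t') := by
  simp +contextual [disjoint_left, hiddenItems, revealedItems]

theorem labelItems_eq_union (hr : ∀ j, r j = none ∨ r j = some (b j)) (t : Fin d) :
    labelItems b t = hiddenItems b r t ∪ revealedItems r t := by
  ext j
  rcases hr j with h | h <;> simp [labelItems, hiddenItems, revealedItems, h]

theorem card_revealedItems (hb : b ∈ labelings c) (hr : IsRevealPattern ℓ b r) (t : Fin d) :
    #(revealedItems r t) = c t - ℓ t := by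
  have := card_union_of_disjoint (disjoint_hiddenItems_revealedItems (b := b) (r := r) t t)
  rw [← labelItems_eq_union hr.1, (mem_filter.1 hb).2 t, hr.2 t] at this
  omega

def revealOf (b : Fin p → Fin d) (H : Fin d → Finset (Fin p)) : Fin p → Option (Fin d) :=
  fun j => if j ∈ H (b j) then none else some (b j)

theorem hiddenItems_revealOf {H : Fin d → Finset (Fin p)} (hH : ∀ t, H t ⊆ labelItems b t)
    (t : Fin d) : hiddenItems b (revealOf b H) t = H t := by
  ext j
  have := @hH t j
  simp only [labelItems, hiddenItems, revealOf, mem_filter, mem_univ, true_and, ite_eq_left_iff,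
    reduceCtorEq, imp_false, not_not] at this ⊢
  constructor
  · rintro ⟨hj, rfl⟩; exact hj
  · intro hj; obtain rfl := this hj; exact ⟨hj, rfl⟩

theorem revealOf_hiddenItems (hr : ∀ j, r j = none ∨ r j = some (b j)) :
    revealOf b (hiddenItems b r) = r := by
  funext j
  rcases hr j with h | h <;> simp [revealOf, hiddenItems, h]

theorem card_isRevealPattern (hb : b ∈ labelings c) :
    #{r | IsRevealPattern ℓ b r} = ∏ t, (c t).choose (ℓ t) := by
  have hmem : ∀ H, H ∈ Fintype.piFinset (fun t => powersetCard (ℓ t) (labelItems b t)) ↔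
      ∀ t, H t ⊆ labelItems b t ∧ #(H t) = ℓ t := by
    simp [mem_powersetCard]
  have hcard : #(Fintype.piFinset fun t => powersetCard (ℓ t) (labelItems b t))
      = ∏ t, (c t).choose (ℓ t) := by
    simp [(mem_filter.1 hb).2]
  rw [← hcard]
  refine card_nbij' (hiddenItems b) (revealOf b) (fun r hr => ?_) (fun H hH => ?_)
    (fun r hr => revealOf_hiddenItems (mem_filter.1 hr).2.1)
    (fun H hH => funext (hiddenItems_revealOf fun t => ((hmem H).1 hH t).1))
  · exact (hmem _).2 fun t => ⟨hiddenItems_subset t, (mem_filter.1 hr).2.2 t⟩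
  · have hH := (hmem H).1 hH
    refine mem_filter.2 ⟨mem_univ _, fun j => ?_, fun t => ?_⟩
    · by_cases h : j ∈ H (b j) <;> simp [revealOf, h]
    · rw [hiddenItems_revealOf (fun t => (hH t).1), (hH t).2]

theorem labelingPMF_nonneg : 0 ≤ labelingPMF c b := by
  unfold labelingPMF; split_ifs <;> positivity

theorem revealPMF_nonneg : 0 ≤ revealPMF c ℓ b r := by
  unfold revealPMF; split_ifs <;> positivity

theorem sum_labelingPMF (hc : ∑ t, c t = p) : ∑ b : Fin p → Fin d, labelingPMF c b = 1 := by
  obtain ⟨b, hb⟩ := exists_card_fiber_eq (ι := Fin p) c (by simpa using hc)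
  have hne : #(labelings c) ≠ 0 := card_ne_zero_of_mem (mem_filter.2 ⟨mem_univ b, hb⟩)
  simp [labelingPMF, sum_ite_mem, hne]

theorem sum_revealPMF (hℓ : ∀ t, ℓ t ≤ c t) (hb : b ∈ labelings c) :
    ∑ r, revealPMF c ℓ b r = 1 := by
  have hne : ∏ t, (c t).choose (ℓ t) ≠ 0 :=
    prod_ne_zero_iff.2 fun t _ => (Nat.choose_pos (hℓ t)).ne'
  unfold revealPMF
  rw [sum_ite, sum_const_zero, add_zero, sum_const, card_isRevealPattern hb, nsmul_eq_mul,
    mul_one_div_cancel (by exact_mod_cast hne)]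

theorem sum_labelingPMF_mul_revealPMF (hc : ∑ t, c t = p) (hℓ : ∀ t, ℓ t ≤ c t) :
    ∑ b : Fin p → Fin d, ∑ r, labelingPMF c b * revealPMF c ℓ b r = 1 := by
  rw [← sum_labelingPMF hc]
  refine sum_congr rfl fun b _ => ?_
  by_cases hb : b ∈ labelings c
  · rw [← mul_sum, sum_revealPMF hℓ hb, mul_one]
  · simp [labelingPMF, hb]

theorem mem_labelings_and_isRevealPattern (h : labelingPMF c b * revealPMF c ℓ b r ≠ 0) :
    b ∈ labelings c ∧ IsRevealPattern ℓ b r := by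
  by_contra hbr
  rcases not_and_or.1 hbr with hb | hr
  · simp [labelingPMF, hb] at h
  · simp [revealPMF, hr] at h

theorem card_filter_label_eq_add (hb : b ∈ labelings c) (hr : IsRevealPattern ℓ b r)
    (x : Fin p → Bool) (t : Fin d) :
    #{j | b j = t ∧ x j = true}
      = #{i | hiddenValues ℓ b r x t i = true} + #{i | revealedValues c ℓ r x t i = true} := by
  rw [hiddenValues, revealedValues, card_filter_restrictFin_eq (hr.2 t),
    card_filter_restrictFin_eq (card_revealedItems hb hr t),
    ← card_union_of_disjoint (disjoint_filter_filter (disjoint_hiddenItems_revealedItems t t)),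
    ← filter_union, ← labelItems_eq_union hr.1, labelItems, filter_filter]

theorem sum_ite_hiddenValues_revealedValues (hb : b ∈ labelings c) (hr : IsRevealPattern ℓ b r)
    (w : Bool → ℝ) (x₀ : (t : Fin d) → Fin (ℓ t) → Bool)
    (x₁ : (t : Fin d) → Fin (c t - ℓ t) → Bool) :
    ∑ x, (if hiddenValues ℓ b r x = x₀ ∧ revealedValues c ℓ r x = x₁ then ∏ j, w (x j) else 0)
      = (∏ t, ∏ i, w (x₀ t i)) * ∏ t, ∏ i, w (x₁ t i) := by
  let S : Fin d ⊕ Fin d → Finset (Fin p) := Sum.elim (hiddenItems b r) (revealedItems r)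
  let n : Fin d ⊕ Fin d → ℕ := Sum.elim ℓ fun t => c t - ℓ t
  let v : (k : Fin d ⊕ Fin d) → Fin (n k) → Bool
    | .inl t => x₀ t
    | .inr t => x₁ t
  have hS : Pairwise (Disjoint on S) := by
    rintro (t | t) (t' | t') htt'
    · exact disjoint_hiddenItems fun h => htt' (congrArg _ h)
    · exact disjoint_hiddenItems_revealedItems t t'
    · exact (disjoint_hiddenItems_revealedItems t' t).symm
    · exact disjoint_revealedItems fun h => htt' (congrArg _ h)
  have hcover : ∀ j, ∃ k, j ∈ S k := by
    intro j
    rcases hr.1 j with h | h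
    · exact ⟨.inl (b j), by simp [S, hiddenItems, h]⟩
    · exact ⟨.inr (b j), by simp [S, revealedItems, h]⟩
  have hn : ∀ k, #(S k) = n k
    | .inl t => hr.2 t
    | .inr t => card_revealedItems hb hr t
  refine Eq.trans (sum_congr rfl fun x _ => if_congr ?_ rfl rfl)
    ((sum_ite_restrictFin_eq_prod hS hcover hn w v).trans (Fintype.prod_sum_type _))
  simp only [funext_iff, Sum.forall]
  rfl

theorem sum_ite_genie_eq_prod (hc : ∑ t, c t = p) (hℓ : ∀ t, ℓ t ≤ c t) (w : Bool → ℝ)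
    (x₀ : (t : Fin d) → Fin (ℓ t) → Bool) (x₁ : (t : Fin d) → Fin (c t - ℓ t) → Bool) :
    ∑ b : Fin p → Fin d, ∑ rx : (Fin p → Option (Fin d)) × (Fin p → Bool),
        (if hiddenValues ℓ b rx.1 rx.2 = x₀ ∧ revealedValues c ℓ rx.1 rx.2 = x₁ then
          labelingPMF c b * revealPMF c ℓ b rx.1 * ∏ j, w (rx.2 j) else 0)
      = (∏ t, ∏ i, w (x₀ t i)) * ∏ t, ∏ i, w (x₁ t i) := by
  have hrow : ∀ (b : Fin p → Fin d) (r : Fin p → Option (Fin d)),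
      ∑ x, (if hiddenValues ℓ b r x = x₀ ∧ revealedValues c ℓ r x = x₁ then
          labelingPMF c b * revealPMF c ℓ b r * ∏ j, w (x j) else 0)
        = labelingPMF c b * revealPMF c ℓ b r *
            ((∏ t, ∏ i, w (x₀ t i)) * ∏ t, ∏ i, w (x₁ t i)) := by
    intro b r
    by_cases h : labelingPMF c b * revealPMF c ℓ b r = 0
    · simp [h]
    obtain ⟨hb, hr⟩ := mem_labelings_and_isRevealPattern h
    rw [← sum_ite_hiddenValues_revealedValues hb hr, mul_sum]
    simp only [mul_ite, mul_zero]
  simp only [Fintype.sum_prod_type, hrow, ← sum_mul, sum_labelingPMF_mul_revealPMF hc hℓ, one_mul]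

end Genie

/-- Corollary 1 (Bernoulli testing): if the entries of a single test `X` are i.i.d.
`Bernoulli(q)` and `Y` depends on `(β, X)` only through the counts `N_1,…,N_d`, then
`I(β; Y | β_{S_ℓ^c}, X) ≤ I(X_{0,ℓ}; Y | X_{1,ℓ})`, where `X_{0,ℓ}` collects the entries
of `X` at the hidden items (`ℓ t` per label `t`) and `X_{1,ℓ}` those at the revealed items
(`c t - ℓ t` per label `t`), grouped by label. -/
theorem bernoulli_genie_mi_bound
    (p d : ℕ) (c : Fin d → ℕ) (hc : ∑ t, c t = p)
    {𝒴 : Type*} [Fintype 𝒴]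
    (W : (Fin d → ℕ) → 𝒴 → ℝ) (hW0 : ∀ N y, 0 ≤ W N y) (hW1 : ∀ N, ∑ y, W N y = 1)
    (ℓ : Fin d → ℕ) (hℓ : ∀ t, ℓ t ≤ c t)
    (q : ℝ) (hq : q ∈ Set.Ioo (0 : ℝ) 1) :
    let bern1 : Bool → ℝ := fun v => if v then q else 1 - q
    let B := (Finset.univ : Finset (Fin p → Fin d)).filter
      (fun b => ∀ s, (Finset.univ.filter (fun j => b j = s)).card = c s)
    let N : (Fin p → Fin d) → (Fin p → Bool) → Fin d → ℕ := fun b x t =>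
      (Finset.univ.filter (fun j => b j = t ∧ x j = true)).card
    let Pb : (Fin p → Fin d) → ℝ := fun b => if b ∈ B then (1 : ℝ) / B.card else 0
    let rev : (Fin p → Fin d) → (Fin p → Option (Fin d)) → ℝ := fun b r =>
      if (∀ j, r j = none ∨ r j = some (b j)) ∧
          (∀ t, (Finset.univ.filter (fun j => r j = none ∧ b j = t)).card = ℓ t)
      then (1 : ℝ) / ∏ t, (c t).choose (ℓ t) else 0
    cmi (fun b (rx : (Fin p → Option (Fin d)) × (Fin p → Bool)) (y : 𝒴) =>
        Pb b * rev b rx.1 * (∏ j, bern1 (rx.2 j)) * W (N b rx.2) y)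
      ≤ cmi (fun (x0 : (t : Fin d) → Fin (ℓ t) → Bool)
              (x1 : (t : Fin d) → Fin (c t - ℓ t) → Bool) (y : 𝒴) =>
          (∏ t, ∏ j, bern1 (x0 t j)) * (∏ t, ∏ j, bern1 (x1 t j)) *
            W (fun t => (Finset.univ.filter (fun j => x0 t j = true)).card +
                (Finset.univ.filter (fun j => x1 t j = true)).card) y) := by
  intro bern1 B N Pb rev
  have hbern : ∀ v, 0 ≤ bern1 v := fun v => by
    cases v <;> simp [bern1, hq.1.le, hq.2.le]
  let Ω := (Fin p → Option (Fin d)) × (Fin p → Bool)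
  refine cmi_mul_kernel_le_of_map (μ := fun b (rx : Ω) => Pb b * rev b rx.1 * ∏ j, bern1 (rx.2 j))
    (K := fun b (rx : Ω) => W (N b rx.2)) (ψ := fun b (rx : Ω) => hiddenValues ℓ b rx.1 rx.2)
    (f := fun rx : Ω => revealedValues c ℓ rx.1 rx.2)
    (fun b rx => mul_nonneg (mul_nonneg labelingPMF_nonneg revealPMF_nonneg)
      (prod_nonneg fun j _ => hbern _))
    (fun _ _ => hW0 _) (fun _ _ => hW1 _) (fun _ _ => hW0 _) (fun _ _ => hW1 _) ?_ ?_
  · intro x₀ x₁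
    exact (sum_ite_genie_eq_prod hc hℓ bern1 x₀ x₁).symm
  · intro b rx h
    obtain ⟨hb, hr⟩ := mem_labelings_and_isRevealPattern (left_ne_zero_of_mul h)
    exact congrArg W (funext fun t => (card_filter_label_eq_add hb hr rx.2 t).symm)
end
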